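/- For every instance I, the greedy choice function output Ch*(I) satisfies non-wastefulness: |Ch*(I)| = min(|S|, q). -/

import Mathlib

open Classical

/-- An instance `I = (S, q, ≻, T, τ, η)`: a finite set of students with a strict
total order (priority, modeled by a linear order where `s' < s` means `s ≻ s'`),
a positive capacity `q`, a finite set of types `T`, a type assignment `τ`, and
ranked quotas `η t j` for ranks `j ∈ {1,…,r}`. -/
structure Inst where
  S : Type
  T : Type
  [fS : Fintype S]
  [dS : DecidableEq S]
  [lS : LinearOrder S]
  [fT : Fintype T]
  [dT : DecidableEq T]
  q : ℕ
  qpos : 0 < q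
  r : ℕ
  τ : S → Finset T
  η : T → ℕ → ℕ

attribute [instance] Inst.fS Inst.dS Inst.lS Inst.fT Inst.dT

/-- `s ≻ s'` : student `s` has strictly higher priority than `s'`. -/
def Inst.prio (I : Inst) (s s' : I.S) : Prop := s' < s

/-- A (potential) reserved seat: a type (`none` = the general type `t₀`),
a rank, and an index. -/
abbrev SeatT (I : Inst) := Option I.T × ℕ × ℕ

/-- The rank of a seat. -/
def seatRank (I : Inst) (v : SeatT I) : ℕ := v.2.1

/-- The type of a seat (`none` = general type `t₀`). -/
def seatType (I : Inst) (v : SeatT I) : Option I.T := v.1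

/-- Seats actually present in the ranked reservation graph: for each type `t`, rank
`1 ≤ j ≤ r` and index `i < η t j` a seat, and `q` general seats of rank `r`. -/
def SeatValid (I : Inst) (v : SeatT I) : Prop :=
  match v.1 with
  | some t => 1 ≤ v.2.1 ∧ v.2.1 ≤ I.r ∧ v.2.2 < I.η t v.2.1
  | none => v.2.1 = I.r ∧ v.2.2 < I.q

/-- There is an edge between student `s` and a seat of type `t` iff `t ∈ τ s` or
`t` is the general type `t₀`. -/
def EdgeOK (I : Inst) (s : I.S) (v : SeatT I) : Prop :=
  match v.1 with
  | some t => t ∈ I.τ s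
  | none => True

/-- A matching in the ranked reservation graph: a set of edges of `G` in which
every student and every seat appears at most once. -/
def IsMatching (I : Inst) (M : Finset (I.S × SeatT I)) : Prop :=
  (∀ e ∈ M, SeatValid I e.2 ∧ EdgeOK I e.1 e.2) ∧
  (∀ e ∈ M, ∀ e' ∈ M, e.1 = e'.1 → e = e') ∧
  (∀ e ∈ M, ∀ e' ∈ M, e.2 = e'.2 → e = e')

/-- `S_M`: the set of students covered by the matching `M`. -/
def covered (I : Inst) (M : Finset (I.S × SeatT I)) : Finset I.S := M.image Prod.fst

/-- `x_i`: the number of edges of rank `i` in `M` (the `i`-th entry of the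
signature `ρ(M)`). -/
def sig (I : Inst) (M : Finset (I.S × SeatT I)) (i : ℕ) : ℕ :=
  (M.filter (fun e => seatRank I e.2 = i)).card

/-- `ρ(M) <lex ρ(M')` : the signature of `M'` is lexicographically strictly
better than that of `M`. -/
def SigLT (I : Inst) (M M' : Finset (I.S × SeatT I)) : Prop :=
  ∃ k, 1 ≤ k ∧ k ≤ I.r ∧ (∀ i, 1 ≤ i → i < k → sig I M i = sig I M' i) ∧
    sig I M k < sig I M' k

/-- A matching of size at most `q` is rank-maximal if its signature is
lexicographically ≥ that of every matching of size at most `q`. -/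
def RankMaximal (I : Inst) (M : Finset (I.S × SeatT I)) : Prop :=
  IsMatching I M ∧ M.card ≤ I.q ∧
    ∀ M', IsMatching I M' → M'.card ≤ I.q → ¬ SigLT I M M'

/-- `U`: the set of groups (type combinations actually occurring among students). -/
def groups (I : Inst) : Finset (Finset I.T) := Finset.univ.image I.τ

/-- `S_u`: the set of students of group `u`. -/
def Su (I : Inst) (u : Finset I.T) : Finset I.S :=
  Finset.univ.filter (fun s => I.τ s = u)

/-- `|M_u|`: the number of students of group `u` covered by `M`. -/
def Mu (I : Inst) (M : Finset (I.S × SeatT I)) (u : Finset I.T) : ℕ :=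
  ((covered I M).filter (fun s => I.τ s = u)).card

/-- `min_{u ∈ U} |M_u| / |S_u|` (as `WithTop ℚ`; it is `⊤` iff `U = ∅`). -/
noncomputable def minRatio (I : Inst) (M : Finset (I.S × SeatT I)) : WithTop ℚ :=
  ((groups I).image (fun u => ((Mu I M u : ℚ) / ((Su I u).card : ℚ)))).min

/-- `M` attains balanced representation: `M` is rank-maximal of size at most `q`
and maximizes `min_{u∈U} |M_u|/|S_u|` over all such matchings. -/
def BalancedRep (I : Inst) (M : Finset (I.S × SeatT I)) : Prop :=
  RankMaximal I M ∧ ∀ M', RankMaximal I M' → minRatio I M' ≤ minRatio I M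

/-- The greedy choice function `Ch*`: process the students in decreasing order of
priority, adding the current student `s` whenever some matching of size at most `q`
that is rank-maximal and attains balanced representation covers `S* ∪ {s}`. -/
noncomputable def ChStar (I : Inst) : Finset I.S :=
  ((Finset.sort (Finset.univ : Finset I.S) (· ≤ ·)).reverse).foldl
    (fun A s =>
      if ∃ M, BalancedRep I M ∧ insert s A ⊆ covered I M then insert s A else A) ∅

/-- Non-wastefulness of a chosen set: `|S*| = min (|S|, q)`. -/
def NonWasteful (I : Inst) (A : Finset I.S) : Prop :=
  A.card = min (Fintype.card I.S) I.q

/-- Maximal diversity of a chosen set: some rank-maximal matching of size at most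
`q` covers only students of `S*`. -/
def MaxDiversity (I : Inst) (A : Finset I.S) : Prop :=
  ∃ M, RankMaximal I M ∧ covered I M ⊆ A

/-- Balanced representation of a chosen set: some matching in `𝕄` attaining
balanced representation covers all of `S*`. -/
def BalancedRepSet (I : Inst) (A : Finset I.S) : Prop :=
  ∃ M, BalancedRep I M ∧ A ⊆ covered I M

/-- Justified envy-freeness: no `s ∉ S*`, `s' ∈ S*` with `s ≻ s'` such that
`(S* ∪ {s}) \ {s'}` satisfies both maximal diversity and balanced representation. -/
def JEF (I : Inst) (A : Finset I.S) : Prop :=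
  ¬ ∃ s s', s ∉ A ∧ s' ∈ A ∧ I.prio s s' ∧
    MaxDiversity I (insert s A \ {s'}) ∧ BalancedRepSet I (insert s A \ {s'})

/-- `I` is valid w.r.t. a target vector `δ`: some rank-maximal matching of size at
most `q` has `|M_u| ≥ δ_u` for every group `u ∈ U`. -/
def ValidWrt (I : Inst) (δ : Finset I.T → ℕ) : Prop :=
  ∃ M, RankMaximal I M ∧ ∀ u ∈ groups I, δ u ≤ Mu I M u

/-- The max-min ratio `α(I)`: the maximum over rank-maximal matchings `M` of
size at most `q` of `min_{u∈U} |M_u|/|S_u|`. -/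
noncomputable def alphaQ (I : Inst) : ℚ :=
  let cands : Finset ℚ :=
    ((Finset.Icc 0 (Fintype.card I.S)) ×ˢ groups I).image
      (fun p => (p.1 : ℚ) / ((Su I p.2).card : ℚ))
  WithBot.unbotD 0 ((cands.filter
      (fun x : ℚ => ∃ M, RankMaximal I M ∧ minRatio I M = (x : WithTop ℚ))).max)

/-- The crucial vector `δ*` : `δ*_u = ⌊α(I)·|S_u|⌋`. -/
noncomputable def deltaStar (I : Inst) (u : Finset I.T) : ℕ :=
  ⌊alphaQ I * ((Su I u).card : ℚ)⌋₊

/-- The `k` highest-priority students of `A`. -/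
def topK (I : Inst) (A : Finset I.S) (k : ℕ) : Finset I.S :=
  A.filter (fun s => (A.filter (fun s' => s ≤ s')).card ≤ k)

/-! ### The flow network -/

/-- Nodes of the flow network: `Sum.inl 0` = source `a`, `Sum.inl 1` = sink `b`,
`Sum.inl 2` = the capacity node `Q`; group nodes, type nodes (`none` = `t₀`),
and rank nodes `t^i` (rank value `i+1` for `i : Fin r`). -/
abbrev Node (I : Inst) := Fin 3 ⊕ Finset I.T ⊕ Option I.T ⊕ (Option I.T × Fin I.r)

def nSrc (I : Inst) : Node I := Sum.inl 0
def nSink (I : Inst) : Node I := Sum.inl 1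
def nQ (I : Inst) : Node I := Sum.inl 2
def nGrp (I : Inst) (u : Finset I.T) : Node I := Sum.inr (Sum.inl u)
def nTyp (I : Inst) (t : Option I.T) : Node I := Sum.inr (Sum.inr (Sum.inl t))
def nRnk (I : Inst) (t : Option I.T) (i : Fin I.r) : Node I :=
  Sum.inr (Sum.inr (Sum.inr (t, i)))

/-- Quotas including the general type: `η_{t₀}^r = q` and `η_{t₀}^j = 0` for `j < r`. -/
def ηgen (I : Inst) (t : Option I.T) (j : ℕ) : ℕ :=
  match t with
  | some t => I.η t j
  | none => if j = I.r then I.q else 0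

/-- Capacities of the flow network (capacity `0` = no edge). -/
def cap (I : Inst) : Node I → Node I → ℕ := fun x y =>
  match x, y with
  | Sum.inl a, Sum.inl b => if a = 2 ∧ b = 1 then I.q else 0
  | Sum.inl a, Sum.inr (Sum.inl u) => if a = 0 then (Su I u).card else 0
  | Sum.inr (Sum.inl u), Sum.inr (Sum.inr (Sum.inl (some t))) =>
      ((Su I u).filter (fun s => t ∈ I.τ s)).card
  | Sum.inr (Sum.inl u), Sum.inr (Sum.inr (Sum.inl none)) => (Su I u).card
  | Sum.inr (Sum.inr (Sum.inl t)), Sum.inr (Sum.inr (Sum.inr (t', i))) =>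
      if t = t' then ηgen I t' ((i : ℕ) + 1) else 0
  | Sum.inr (Sum.inr (Sum.inr (t, i))), Sum.inl a =>
      if a = 2 then ηgen I t ((i : ℕ) + 1) else 0
  | _, _ => 0

/-- Costs of the flow network: the edge `t → t^i` has cost equal to the rank
`i+1`; all other edges have cost `0`. -/
def cost (I : Inst) : Node I → Node I → ℕ := fun x y =>
  match x, y with
  | Sum.inr (Sum.inr (Sum.inl t)), Sum.inr (Sum.inr (Sum.inr (t', i))) =>
      if t = t' then (i : ℕ) + 1 else 0
  | _, _ => 0

/-- A flow: nonnegative, within capacities, and conserved at every node other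
than the source and the sink. -/
def IsFlow (I : Inst) (f : Node I → Node I → ℝ) : Prop :=
  (∀ x y, 0 ≤ f x y) ∧ (∀ x y, f x y ≤ (cap I x y : ℝ)) ∧
  (∀ x : Node I, x ≠ nSrc I → x ≠ nSink I → (∑ y, f y x) = ∑ y, f x y)

/-- The value of a flow: `Σ_u f(a, u)`. -/
noncomputable def flowVal (I : Inst) (f : Node I → Node I → ℝ) : ℝ :=
  ∑ u : Finset I.T, f (nSrc I) (nGrp I u)

/-- The cost of a flow: `Σ_e cost(e) · f(e)`. -/
noncomputable def flowCost (I : Inst) (f : Node I → Node I → ℝ) : ℝ :=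
  ∑ x : Node I, ∑ y : Node I, (cost I x y : ℝ) * f x y

/-- A maximum flow. -/
def IsMaxFlow (I : Inst) (f : Node I → Node I → ℝ) : Prop :=
  IsFlow I f ∧ ∀ g, IsFlow I g → flowVal I g ≤ flowVal I f

/-- A minimum-cost maximum flow. -/
def IsMinCostMaxFlow (I : Inst) (f : Node I → Node I → ℝ) : Prop :=
  IsMaxFlow I f ∧ ∀ g, IsMaxFlow I g → flowCost I f ≤ flowCost I g

/-- The flow `f_M` induced by a matching `M`. -/
noncomputable def inducedFlow (I : Inst) (M : Finset (I.S × SeatT I)) :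
    Node I → Node I → ℝ := fun x y =>
  match x, y with
  | Sum.inl a, Sum.inl b => if a = 2 ∧ b = 1 then (M.card : ℝ) else 0
  | Sum.inl a, Sum.inr (Sum.inl u) => if a = 0 then (Mu I M u : ℝ) else 0
  | Sum.inr (Sum.inl u), Sum.inr (Sum.inr (Sum.inl t)) =>
      ((M.filter (fun e => I.τ e.1 = u ∧ seatType I e.2 = t)).card : ℝ)
  | Sum.inr (Sum.inr (Sum.inl t)), Sum.inr (Sum.inr (Sum.inr (t', i))) =>
      if t = t' then
        ((M.filter (fun e => seatType I e.2 = t ∧ seatRank I e.2 = (i : ℕ) + 1)).card : ℝ)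
      else 0
  | Sum.inr (Sum.inr (Sum.inr (t, i))), Sum.inl a =>
      if a = 2 then
        ((M.filter (fun e => seatType I e.2 = t ∧ seatRank I e.2 = (i : ℕ) + 1)).card : ℝ)
      else 0
  | _, _ => 0

/-! ### Alternating and augmenting paths -/

/-- The edge set of a path encoded by its list of students `a₀,…` and list of
seats `v₀,…` (edges `(aₖ, vₖ)` and `(aₖ₊₁, vₖ)`). -/
def edgesOf (I : Inst) (students : List I.S) (seats : List (SeatT I)) :
    Finset (I.S × SeatT I) :=
  (students.zip seats).toFinset ∪ (students.tail.zip seats).toFinset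

/-- Symmetric difference `M ⊕ P = (M \ P) ∪ (P \ M)`. -/
def symmDiffM (I : Inst) (M P : Finset (I.S × SeatT I)) : Finset (I.S × SeatT I) :=
  (M \ P) ∪ (P \ M)

/-- An alternating path w.r.t. `M` from an uncovered student to a covered student:
students `a₀, …, aₙ` and seats `v₀, …, vₙ₋₁`, with `(aₖ, vₖ) ∉ M` edges of `G`
and `(aₖ₊₁, vₖ) ∈ M`. -/
structure AltPath (I : Inst) (M : Finset (I.S × SeatT I)) where
  students : List I.S
  seats : List (SeatT I)
  len : students.length = seats.length + 1
  nodupS : students.Nodup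
  nodupV : seats.Nodup
  notM : ∀ e ∈ students.zip seats, e ∉ M ∧ SeatValid I e.2 ∧ EdgeOK I e.1 e.2
  inM : ∀ e ∈ students.tail.zip seats, e ∈ M

/-- The edge set of an alternating path. -/
def AltPath.edges {I : Inst} {M : Finset (I.S × SeatT I)} (P : AltPath I M) :
    Finset (I.S × SeatT I) :=
  edgesOf I P.students P.seats

/-- An augmenting path w.r.t. `M` from an uncovered student to an uncovered seat:
students `a₀, …, aₙ` and seats `v₀, …, vₙ`, with `(aₖ, vₖ) ∉ M` edges of `G`
and `(aₖ₊₁, vₖ) ∈ M`. -/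
structure AugPath (I : Inst) (M : Finset (I.S × SeatT I)) where
  students : List I.S
  seats : List (SeatT I)
  len : students.length = seats.length
  nodupS : students.Nodup
  nodupV : seats.Nodup
  notM : ∀ e ∈ students.zip seats, e ∉ M ∧ SeatValid I e.2 ∧ EdgeOK I e.1 e.2
  inM : ∀ e ∈ students.tail.zip seats, e ∈ M

/-- The edge set of an augmenting path. -/
def AugPath.edges {I : Inst} {M : Finset (I.S × SeatT I)} (P : AugPath I M) :
    Finset (I.S × SeatT I) :=
  edgesOf I P.students P.seats

/-- The instance obtained from `I` by restricting the student set to `X`. -/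
@[reducible] def restrict (I : Inst) (X : Finset I.S) : Inst :=
  { S := {s : I.S // s ∈ X}
    T := I.T
    fS := inferInstance
    dS := inferInstance
    lS := inferInstance
    fT := I.fT
    dT := I.dT
    q := I.q
    qpos := I.qpos
    r := I.r
    τ := fun s => I.τ s.1
    η := I.η }

/-!
Joining an unmatched student to a free general seat raises the signature of a matching only at
rank `r` and lowers none of its group ratios, so a rank-maximal matching with balanced
representation and fewer than `min (|S|, q)` edges extends to a larger one. The greedy set is
covered by such a matching and no further student can be added to it, so it is exactly the set
of students covered by such a matching, and that matching cannot be extended.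
-/

section Greedy

variable {α : Type*} [DecidableEq α] (P : Finset α → Prop)

noncomputable def greedyStep (A : Finset α) (s : α) : Finset α :=
  if P (insert s A) then insert s A else A

lemma subset_foldl_greedyStep (L : List α) (A : Finset α) : A ⊆ L.foldl (greedyStep P) A := by
  induction L generalizing A with
  | nil => exact subset_rfl
  | cons s L ih =>
    refine subset_trans ?_ (ih _)
    unfold greedyStep
    split_ifs
    exacts [Finset.subset_insert _ _, subset_rfl]

lemma foldl_greedyStep_feasible {L : List α} {A : Finset α} (hA : P A) :
    P (L.foldl (greedyStep P) A) := by
  induction L generalizing A with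
  | nil => exact hA
  | cons s L ih =>
    refine ih ?_
    unfold greedyStep
    split_ifs with h
    exacts [h, hA]

lemma foldl_greedyStep_maximal (hP : Antitone P) {L : List α} {A : Finset α}
    {s : α} (hs : s ∈ L) (hsA : s ∉ L.foldl (greedyStep P) A) :
    ¬ P (insert s (L.foldl (greedyStep P) A)) := by
  induction L generalizing A with
  | nil => simp at hs
  | cons t L ih =>
    rcases List.mem_cons.mp hs with rfl | hs
    · intro hfin
      have hstep : ¬ P (insert s A) := fun h => hsA <| by
        refine subset_foldl_greedyStep P L _ ?_
        simp only [greedyStep, if_pos h, Finset.mem_insert_self]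
      refine hstep (hP (Finset.insert_subset_insert _ ?_) hfin)
      exact (subset_foldl_greedyStep P [s] A).trans (subset_foldl_greedyStep P L _)
    · exact ih hs hsA

end Greedy

section Matching

lemma setOf_seatValid_finite (I : Inst) : {v : SeatT I | SeatValid I v}.Finite := by
  refine Set.Finite.subset (Set.finite_iUnion fun t : Option I.T =>
    (Set.finite_Iic I.r).biUnion fun j _ => (Set.finite_Iio (ηgen I t j)).image
      fun i => ((t, j, i) : SeatT I)) ?_
  rintro ⟨_ | t, j, i⟩ hv <;>
    simp_all [SeatValid, ηgen]

lemma setOf_matching_finite (I : Inst) :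
    {M : Finset (I.S × SeatT I) | IsMatching I M ∧ M.card ≤ I.q}.Finite := by
  let E : Finset (I.S × SeatT I) := Finset.univ ×ˢ (setOf_seatValid_finite I).toFinset
  refine (E.powerset : Set (Finset (I.S × SeatT I))).toFinite.subset ?_
  rintro M ⟨hM, -⟩
  rw [Finset.mem_coe, Finset.mem_powerset]
  intro e he
  simpa [E] using (hM.1 e he).1

variable {I : Inst}

lemma toLex_sig_lt_of_sigLT {M M' : Finset (I.S × SeatT I)} (h : SigLT I M M') :
    toLex (fun i : Fin I.r => sig I M (i + 1)) < toLex (fun i : Fin I.r => sig I M' (i + 1)) := by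
  obtain ⟨k, hk1, hkr, hpre, hlt⟩ := h
  obtain ⟨k, rfl⟩ := Nat.exists_eq_add_of_le' hk1
  exact ⟨⟨k, hkr⟩, fun j hj => hpre _ (by omega) (by simpa using Nat.add_lt_add_right hj 1),
    hlt⟩

lemma exists_rankMaximal (I : Inst) : ∃ M, RankMaximal I M := by
  obtain ⟨M, ⟨hM, hMq⟩, hmax⟩ := Set.exists_max_image _
    (fun M => toLex (fun i : Fin I.r => sig I M (i + 1))) (setOf_matching_finite I)
    ⟨∅, ⟨⟨by simp, by simp, by simp⟩, by simp⟩⟩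
  exact ⟨M, hM, hMq, fun M' hM' hM'q hlt =>
    (hmax M' ⟨hM', hM'q⟩).not_gt (toLex_sig_lt_of_sigLT hlt)⟩

lemma exists_balancedRep (I : Inst) : ∃ M, BalancedRep I M := by
  obtain ⟨M, hM, hmax⟩ := Set.exists_max_image {M | RankMaximal I M} (minRatio I)
    ((setOf_matching_finite I).subset fun M hM => ⟨hM.1, hM.2.1⟩) (exists_rankMaximal I)
  exact ⟨M, hM, hmax⟩

lemma IsMatching.card_covered {M : Finset (I.S × SeatT I)} (hM : IsMatching I M) :
    (covered I M).card = M.card :=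
  Finset.card_image_of_injOn fun e he e' he' => hM.2.1 e he e' he'

lemma Mu_mono (u : Finset I.T) : Monotone fun M => Mu I M u :=
  fun _ _ h => Finset.card_le_card (Finset.filter_subset_filter _ (Finset.image_subset_image h))

lemma minRatio_mono : Monotone (minRatio I) := by
  intro M M' h
  refine Finset.le_min fun b hb => ?_
  obtain ⟨u, hu, rfl⟩ := Finset.mem_image.mp hb
  refine (Finset.min_le (Finset.mem_image_of_mem _ hu)).trans (WithTop.coe_le_coe.mpr ?_)
  gcongr
  exact Mu_mono u h

lemma sig_insert {M : Finset (I.S × SeatT I)} {e : I.S × SeatT I} (he : e ∉ M) (i : ℕ) :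
    sig I (insert e M) i = sig I M i + if seatRank I e.2 = i then 1 else 0 := by
  unfold sig
  rw [Finset.filter_insert]
  split_ifs with h
  · exact Finset.card_insert_of_notMem fun h' => he (Finset.mem_filter.mp h').1
  · rfl

lemma IsMatching.insert {M : Finset (I.S × SeatT I)} (hM : IsMatching I M) {s : I.S}
    {v : SeatT I} (hs : s ∉ covered I M) (hv : v ∉ M.image Prod.snd) (hvalid : SeatValid I v)
    (hedge : EdgeOK I s v) : IsMatching I (insert (s, v) M) := by
  have hs' : ∀ e ∈ M, e.1 ≠ s := fun e he h => hs (Finset.mem_image.mpr ⟨e, he, h⟩)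
  have hv' : ∀ e ∈ M, e.2 ≠ v := fun e he h => hv (Finset.mem_image.mpr ⟨e, he, h⟩)
  refine ⟨?_, ?_, ?_⟩ <;> simp only [Finset.mem_insert, forall_eq_or_imp]
  · exact ⟨⟨hvalid, hedge⟩, hM.1⟩
  · exact ⟨⟨by simp, fun e he h => absurd h.symm (hs' e he)⟩,
      fun e he => ⟨fun h => absurd h (hs' e he), hM.2.1 e he⟩⟩
  · exact ⟨⟨by simp, fun e he h => absurd h.symm (hv' e he)⟩,
      fun e he => ⟨fun h => absurd h (hv' e he), hM.2.2 e he⟩⟩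

/-- An edge of rank `r` only changes the last entry of the signature. -/
lemma RankMaximal.insert_of_seatRank_eq {M : Finset (I.S × SeatT I)} (hM : RankMaximal I M)
    {e : I.S × SeatT I} (he : e ∉ M) (hrank : seatRank I e.2 = I.r)
    (hmatch : IsMatching I (insert e M)) (hq : (insert e M).card ≤ I.q) :
    RankMaximal I (insert e M) := by
  refine ⟨hmatch, hq, fun M' hM' hM'q ⟨k, hk1, hkr, hpre, hlt⟩ => hM.2.2 M' hM' hM'q
    ⟨k, hk1, hkr, fun i hi1 hik => ?_, ?_⟩⟩
  · have := sig_insert he i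
    rw [hrank, if_neg (by omega)] at this
    rw [← hpre i hi1 hik, this, add_zero]
  · have := sig_insert he k
    omega

lemma BalancedRep.insert_of_seatRank_eq {M : Finset (I.S × SeatT I)} (hM : BalancedRep I M)
    {e : I.S × SeatT I} (he : e ∉ M) (hrank : seatRank I e.2 = I.r)
    (hmatch : IsMatching I (insert e M)) (hq : (insert e M).card ≤ I.q) :
    BalancedRep I (insert e M) :=
  ⟨hM.1.insert_of_seatRank_eq he hrank hmatch hq, fun M' hM' =>
    (hM.2 M' hM').trans (minRatio_mono (Finset.subset_insert e M))⟩

lemma exists_notMem_covered {M : Finset (I.S × SeatT I)} (hM : IsMatching I M)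
    (hcard : M.card < Fintype.card I.S) : ∃ s, s ∉ covered I M := by
  by_contra! h
  have := Finset.card_le_card fun s (_ : s ∈ Finset.univ) => h s
  rw [Finset.card_univ, hM.card_covered] at this
  omega

lemma exists_free_generalSeat {M : Finset (I.S × SeatT I)} (hcard : M.card < I.q) :
    ∃ i < I.q, ((none, I.r, i) : SeatT I) ∉ M.image Prod.snd := by
  by_contra! h
  have hsub :
      (Finset.range I.q).image (fun i => ((none, I.r, i) : SeatT I)) ⊆ M.image Prod.snd := by
    simpa [Finset.image_subset_iff] using h
  have := (Finset.card_le_card hsub).trans Finset.card_image_le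
  rw [Finset.card_image_of_injective _ fun i j h => by simpa using h, Finset.card_range] at this
  omega

lemma BalancedRep.exists_insert {M : Finset (I.S × SeatT I)} (hM : BalancedRep I M)
    (hcard : M.card < min (Fintype.card I.S) I.q) :
    ∃ s ∉ covered I M, ∃ v, BalancedRep I (insert (s, v) M) := by
  obtain ⟨s, hs⟩ := exists_notMem_covered hM.1.1 (lt_min_iff.mp hcard).1
  obtain ⟨i, hi, hv⟩ := exists_free_generalSeat (lt_min_iff.mp hcard).2
  have he : (s, ((none, I.r, i) : SeatT I)) ∉ M := fun h => hs (Finset.mem_image_of_mem _ h)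
  have hmatch := hM.1.1.insert hs hv ⟨rfl, hi⟩ trivial
  refine ⟨s, hs, _, hM.insert_of_seatRank_eq he rfl hmatch ?_⟩
  rw [Finset.card_insert_of_notMem he]
  omega

end Matching

section Choice

variable {I : Inst}

lemma balancedRepSet_antitone : Antitone (BalancedRepSet I) :=
  fun _ _ hAB ⟨M, hM, hBM⟩ => ⟨M, hM, hAB.trans hBM⟩

lemma BalancedRepSet.card_eq_min {A : Finset I.S} (hA : BalancedRepSet I A)
    (hmax : ∀ s ∉ A, ¬ BalancedRepSet I (insert s A)) :
    A.card = min (Fintype.card I.S) I.q := by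
  obtain ⟨M, hM, hAM⟩ := hA
  have hcov : covered I M = A := by
    refine Finset.Subset.antisymm (fun s hs => ?_) hAM
    by_contra hsA
    exact hmax s hsA ⟨M, hM, Finset.insert_subset hs hAM⟩
  have hcard : A.card = M.card := hcov ▸ hM.1.1.card_covered
  refine le_antisymm (le_min (Finset.card_le_univ A) (hcard ▸ hM.1.2.1)) (not_lt.mp fun hlt => ?_)
  obtain ⟨s, hs, v, hM'⟩ := hM.exists_insert (hcard ▸ hlt)
  refine hmax s (hcov ▸ hs) ⟨_, hM', ?_⟩
  rw [← hcov]
  exact (Finset.image_insert Prod.fst (s, v) M).ge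

end Choice

/-- `Ch*(I)` satisfies non-wastefulness: `|Ch*(I)| = min(|S|, q)`. -/
theorem chStar_nonWasteful (I : Inst) :
    (ChStar I).card = min (Fintype.card I.S) I.q := by
  let L := (Finset.sort (Finset.univ : Finset I.S) (· ≤ ·)).reverse
  change (L.foldl (greedyStep (BalancedRepSet I)) ∅).card = _
  obtain ⟨M, hM⟩ := exists_balancedRep I
  refine BalancedRepSet.card_eq_min
    (foldl_greedyStep_feasible _ ⟨M, hM, Finset.empty_subset _⟩) fun s hs => ?_
  exact foldl_greedyStep_maximal _ balancedRepSet_antitone (by simp [L]) hs
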